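/- arXiv:2507.00277 — 3 statements merged into one kernel-verified Lean document; each statement's English description precedes it below -/
import Mathlib

section
/- Let m ≥ 1 be a natural number and let a : Fin m → ℕ be a sequence of interval sizes with a j ≥ 1 for every j, ordered from the single queried (left) side inward, so that the outside of interval j equals ∑_{i < j} a i. Let N = ∑_{j} a j. If for every index j with j + 1 < m one has a j + a (j+1) ≥ ∑_{i < j} a i, then (m : ℝ) ≤ max 2 (2 · logb 2 (N : ℝ) + 3). -/
/-! Write `S j` for the total size of the first `j` intervals. The merge rule says that the
intervals `j` and `j + 1` together have size at least `S j`, so `S (j + 2) ≥ 2 * S j`: the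
outside at least doubles every two intervals. Starting from `S 2 ≥ 2` this gives
`N ≥ 2 ^ ⌊m / 2⌋`, that is `m ≤ 2 * log₂ N + 1`. -/

open Real Finset

namespace MergeRule

theorem two_pow_succ_le_sum_range {m : ℕ} {b : ℕ → ℕ} (hpos : ∀ i < m, 1 ≤ b i)
    (hmerge : ∀ j, j + 1 < m → ∑ i ∈ range j, b i ≤ b j + b (j + 1)) (k : ℕ)
    (hk : 2 * k + 2 ≤ m) : 2 ^ (k + 1) ≤ ∑ i ∈ range (2 * k + 2), b i := by
  induction k with
  | zero =>
    have h₀ := hpos 0 (by omega)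
    have h₁ := hpos 1 (by omega)
    simp only [sum_range_succ, sum_range_zero]
    omega
  | succ k ih =>
    have hpair := hmerge (2 * k + 2) (by omega)
    have ih := ih (by omega)
    have hsplit : ∑ i ∈ range (2 * (k + 1) + 2), b i =
        ∑ i ∈ range (2 * k + 2), b i + b (2 * k + 2) + b (2 * k + 2 + 1) := by
      rw [show 2 * (k + 1) + 2 = 2 * k + 2 + 1 + 1 by ring, sum_range_succ, sum_range_succ]
    rw [hsplit, pow_succ]
    omega

theorem two_pow_half_le_sum_range {m : ℕ} {b : ℕ → ℕ} (hm : 2 ≤ m) (hpos : ∀ i < m, 1 ≤ b i)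
    (hmerge : ∀ j, j + 1 < m → ∑ i ∈ range j, b i ≤ b j + b (j + 1)) :
    2 ^ (m / 2) ≤ ∑ i ∈ range m, b i := by
  obtain ⟨k, hk⟩ : ∃ k, m / 2 = k + 1 := ⟨m / 2 - 1, by omega⟩
  calc 2 ^ (m / 2) ≤ ∑ i ∈ range (2 * k + 2), b i :=
        hk ▸ two_pow_succ_le_sum_range hpos hmerge k (by omega)
    _ ≤ ∑ i ∈ range m, b i := sum_le_sum_of_subset (range_subset_range.2 (by omega))

theorem le_two_mul_logb_add_one {m N : ℕ} (h : 2 ^ (m / 2) ≤ N) :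
    (m : ℝ) ≤ 2 * logb 2 N + 1 := by
  have hN : (0 : ℝ) < N := by exact_mod_cast (Nat.two_pow_pos _).trans_le h
  have hlog : ((m / 2 : ℕ) : ℝ) ≤ logb 2 N := by
    rw [le_logb_iff_rpow_le one_lt_two hN, rpow_natCast]
    exact_mod_cast h
  have hm : (m : ℝ) ≤ 2 * (m / 2 : ℕ) + 1 := by exact_mod_cast (by omega : m ≤ 2 * (m / 2) + 1)
  linarith

theorem sum_filter_val_lt_eq_sum_range {M : Type*} [AddCommMonoid M] {m : ℕ} (a : Fin m → M)
    {j : ℕ} (hj : j ≤ m) :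
    ∑ i ∈ univ.filter (fun i : Fin m => (i : ℕ) < j), a i =
      ∑ i ∈ range j, if h : i < m then a ⟨i, h⟩ else 0 := by
  rw [sum_filter, sum_fin_eq_sum_range, ← sum_range_add_sum_Ico _ hj,
    sum_eq_zero (s := Ico j m) fun i hi => by simp [(mem_Ico.1 hi).1], add_zero]
  exact sum_congr rfl fun i hi => by simp [mem_range.1 hi]

end MergeRule

open MergeRule in
theorem merge_rule_one_sided_gap_interval_count_general
    (m : ℕ) (a : Fin m → ℕ) (ha : ∀ j, 1 ≤ a j)
    (N : ℕ) (hN : N = ∑ j, a j)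
    (hmerge : ∀ j : Fin m, ∀ h : (j : ℕ) + 1 < m,
      a j + a ⟨(j : ℕ) + 1, h⟩ ≥
        ∑ i ∈ Finset.univ.filter (fun i : Fin m => (i : ℕ) < (j : ℕ)), a i) :
    (m : ℝ) ≤ max 2 (2 * logb 2 (N : ℝ) + 3) := by
  rcases le_or_gt m 1 with hm | hm
  · exact le_max_of_le_left (by exact_mod_cast hm.trans one_le_two)
  set b : ℕ → ℕ := fun i => if h : i < m then a ⟨i, h⟩ else 0
  have hb : ∀ i (h : i < m), b i = a ⟨i, h⟩ := fun i h => dif_pos h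
  have hNb : N = ∑ i ∈ range m, b i := hN.trans (sum_fin_eq_sum_range a)
  have hmerge_range : ∀ j, j + 1 < m → ∑ i ∈ range j, b i ≤ b j + b (j + 1) := fun j hj => by
    rw [hb j (by omega), hb (j + 1) hj, ← sum_filter_val_lt_eq_sum_range a (by omega)]
    exact hmerge ⟨j, by omega⟩ hj
  have hpow := two_pow_half_le_sum_range hm (fun i hi => (hb i hi).symm ▸ ha _) hmerge_range
  have hlog := le_two_mul_logb_add_one (hNb ▸ hpow)
  exact le_max_of_le_right (by linarith)

/-- Interval count in a 1-sided gap: intervals ordered from the queried side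
inward, each of size at least 1, satisfying the merge rule
`a j + a (j+1) ≥ ∑_{i < j} a i`, number at most `max 2 (2 log₂ N + 3)`
where `N` is the total size. -/
theorem merge_rule_one_sided_gap_interval_count
    (m : ℕ) (hm : 1 ≤ m) (a : Fin m → ℕ) (ha : ∀ j, 1 ≤ a j)
    (N : ℕ) (hN : N = ∑ j, a j)
    (hmerge : ∀ j : Fin m, ∀ h : (j : ℕ) + 1 < m,
      a j + a ⟨(j : ℕ) + 1, h⟩ ≥
        ∑ i ∈ Finset.univ.filter (fun i : Fin m => (i : ℕ) < (j : ℕ)), a i) :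
    (m : ℝ) ≤ max 2 (2 * logb 2 (N : ℝ) + 3) :=
  merge_rule_one_sided_gap_interval_count_general m a ha N hN hmerge
end

section
/- Let p ≥ 1 and q ≥ 1 be natural numbers, let a : Fin p → ℕ be the sizes of the left intervals ordered from the left boundary inward and b : Fin q → ℕ the sizes of the right intervals ordered from the right boundary inward, with a j ≥ 1 and b j ≥ 1 for every j. Suppose the merge rule holds on each side: for every j with j + 1 < p, a j + a (j+1) ≥ ∑_{i < j} a i, and for every j with j + 1 < q, b j + b (j+1) ≥ ∑_{i < j} b i. Let N = ∑_{j} a j + ∑_{j} b j. Then (p + q : ℝ) ≤ 4 · logb 2 (N : ℝ) + 2. -/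
/-!
The merge rule at `j` says that intervals `j` and `j + 1` together are at least as large as
everything outside them, so on each side the prefix sums `S j` of the sizes at least double
every two steps: `S (j + 2) ≥ 2 * S j`. Since `S 1, S 2 ≥ 1`, a side with `p` intervals has
total size at least `2 ^ (p / 2)`, i.e. `p ≤ 2 * log₂ S p + 1`. Each side's total is at most
`N`, and adding the two bounds gives the claim.
-/

open Real Finset

/-- `∑ i ∈ range j, a i` is the outside of the `j`-th interval. -/
def MergeRule (a : ℕ → ℕ) (p : ℕ) : Prop :=
  ∀ j, j + 1 < p → ∑ i ∈ range j, a i ≤ a j + a (j + 1)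

theorem MergeRule.mono {a : ℕ → ℕ} {p m : ℕ} (h : MergeRule a p) (hm : m ≤ p) :
    MergeRule a m :=
  fun j hj => h j (by omega)

theorem two_pow_half_le_sum_range {a : ℕ → ℕ} :
    ∀ {p : ℕ}, 0 < p → (∀ i < p, 1 ≤ a i) → MergeRule a p →
      2 ^ (p / 2) ≤ ∑ i ∈ range p, a i
  | 1, _, hpos, _ => by simpa using hpos 0 one_pos
  | 2, _, hpos, _ => by
    have := hpos 0 two_pos
    have := hpos 1 one_lt_two
    simp only [sum_range_succ, sum_range_zero]
    omega
  | m + 3, _, hpos, hmerge => by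
    have ih := two_pow_half_le_sum_range (p := m + 1) m.succ_pos
      (fun i hi => hpos i (by omega)) (hmerge.mono (by omega))
    have hdouble : ∑ i ∈ range (m + 1), a i ≤ a (m + 1) + a (m + 2) :=
      hmerge (m + 1) (by omega)
    rw [show (m + 3) / 2 = (m + 1) / 2 + 1 by omega, pow_succ, sum_range_succ, sum_range_succ]
    omega

theorem le_two_mul_log_sum_range_add_one {a : ℕ → ℕ} {p : ℕ} (hpos : ∀ i < p, 1 ≤ a i)
    (hmerge : MergeRule a p) : p ≤ 2 * Nat.log 2 (∑ i ∈ range p, a i) + 1 := by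
  rcases Nat.eq_zero_or_pos p with rfl | hp
  · simp
  · have := Nat.le_log_of_pow_le one_lt_two (two_pow_half_le_sum_range hp hpos hmerge)
    omega

section ExtendByZero

variable {M : Type*} {p : ℕ}

def extendByZero [Zero M] (a : Fin p → M) (i : ℕ) : M :=
  if h : i < p then a ⟨i, h⟩ else 0

theorem extendByZero_of_lt [Zero M] (a : Fin p → M) {i : ℕ} (hi : i < p) :
    extendByZero a i = a ⟨i, hi⟩ :=
  dif_pos hi

theorem sum_range_extendByZero [AddCommMonoid M] (a : Fin p → M) :
    ∑ i ∈ range p, extendByZero a i = ∑ j, a j :=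
  (sum_fin_eq_sum_range a).symm

theorem sum_filter_val_lt_eq_sum_range_extendByZero [AddCommMonoid M] (a : Fin p → M)
    {j : ℕ} (hj : j ≤ p) :
    ∑ i ∈ univ.filter (fun i : Fin p => (i : ℕ) < j), a i = ∑ i ∈ range j, extendByZero a i := by
  rw [sum_filter, sum_fin_eq_sum_range, ← sum_range_add_sum_Ico _ hj,
    sum_eq_zero (s := Ico j p) (fun i hi => by rw [mem_Ico] at hi; simp [hi.1.not_gt]), add_zero]
  exact sum_congr rfl fun i hi => by rw [mem_range] at hi; simp [extendByZero, hi, hi.trans_le hj]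

end ExtendByZero

theorem mergeRule_extendByZero {p : ℕ} (a : Fin p → ℕ)
    (hmerge : ∀ j : Fin p, ∀ h : (j : ℕ) + 1 < p,
      a j + a ⟨(j : ℕ) + 1, h⟩ ≥ ∑ i ∈ univ.filter (fun i : Fin p => (i : ℕ) < (j : ℕ)), a i) :
    MergeRule (extendByZero a) p := by
  intro j hj
  have := hmerge ⟨j, by omega⟩ hj
  rwa [sum_filter_val_lt_eq_sum_range_extendByZero a (by omega),
    ← extendByZero_of_lt a (by omega : j < p), ← extendByZero_of_lt a hj] at this

theorem le_two_mul_log_sum_add_one {p : ℕ} (a : Fin p → ℕ) (hpos : ∀ j, 1 ≤ a j)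
    (hmerge : ∀ j : Fin p, ∀ h : (j : ℕ) + 1 < p,
      a j + a ⟨(j : ℕ) + 1, h⟩ ≥ ∑ i ∈ univ.filter (fun i : Fin p => (i : ℕ) < (j : ℕ)), a i) :
    p ≤ 2 * Nat.log 2 (∑ j, a j) + 1 := by
  have := le_two_mul_log_sum_range_add_one
    (fun i hi => (extendByZero_of_lt a hi).trans_ge (hpos _)) (mergeRule_extendByZero a hmerge)
  rwa [sum_range_extendByZero] at this

theorem merge_rule_two_sided_gap_interval_count_general
    (p q : ℕ)
    (a : Fin p → ℕ) (b : Fin q → ℕ)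
    (ha : ∀ j, 1 ≤ a j) (hb : ∀ j, 1 ≤ b j)
    (hmergea : ∀ j : Fin p, ∀ h : (j : ℕ) + 1 < p,
      a j + a ⟨(j : ℕ) + 1, h⟩ ≥
        ∑ i ∈ Finset.univ.filter (fun i : Fin p => (i : ℕ) < (j : ℕ)), a i)
    (hmergeb : ∀ j : Fin q, ∀ h : (j : ℕ) + 1 < q,
      b j + b ⟨(j : ℕ) + 1, h⟩ ≥
        ∑ i ∈ Finset.univ.filter (fun i : Fin q => (i : ℕ) < (j : ℕ)), b i)
    (N : ℕ) (hN : N = ∑ j, a j + ∑ j, b j) :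
    (p + q : ℝ) ≤ 4 * logb 2 (N : ℝ) + 2 := by
  have hp := le_two_mul_log_sum_add_one a ha hmergea
  have hq := le_two_mul_log_sum_add_one b hb hmergeb
  have hlog_a : Nat.log 2 (∑ j, a j) ≤ Nat.log 2 N := Nat.log_mono_right (by omega)
  have hlog_b : Nat.log 2 (∑ j, b j) ≤ Nat.log 2 N := Nat.log_mono_right (by omega)
  have hcount : (p + q : ℝ) ≤ 4 * (Nat.log 2 N : ℝ) + 2 := by exact_mod_cast (by omega)
  have hlog : (Nat.log 2 N : ℝ) ≤ logb 2 N := by exact_mod_cast Real.natLog_le_logb N 2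
  linarith

/-- Interval count in a 2-sided gap: left intervals of sizes `a` (ordered from
the left boundary inward) and right intervals of sizes `b` (ordered from the
right boundary inward), each of size at least 1, satisfying the merge rule on
each side; then the total number of intervals is at most `4 log₂ N + 2`,
where `N` is the total number of elements. -/
theorem merge_rule_two_sided_gap_interval_count
    (p q : ℕ) (hp : 1 ≤ p) (hq : 1 ≤ q)
    (a : Fin p → ℕ) (b : Fin q → ℕ)
    (ha : ∀ j, 1 ≤ a j) (hb : ∀ j, 1 ≤ b j)
    (hmergea : ∀ j : Fin p, ∀ h : (j : ℕ) + 1 < p,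
      a j + a ⟨(j : ℕ) + 1, h⟩ ≥
        ∑ i ∈ Finset.univ.filter (fun i : Fin p => (i : ℕ) < (j : ℕ)), a i)
    (hmergeb : ∀ j : Fin q, ∀ h : (j : ℕ) + 1 < q,
      b j + b ⟨(j : ℕ) + 1, h⟩ ≥
        ∑ i ∈ Finset.univ.filter (fun i : Fin q => (i : ℕ) < (j : ℕ)), b i)
    (N : ℕ) (hN : N = ∑ j, a j + ∑ j, b j) :
    (p + q : ℝ) ≤ 4 * logb 2 (N : ℝ) + 2 :=
  merge_rule_two_sided_gap_interval_count_general p q a b ha hb hmergea hmergeb N hN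
end

section
/- Let B ≥ 2 and k ≥ 1 be natural numbers, and let ℓ be a natural number such that ∑_{j=0}^{k-1} B^(2^j) < ℓ and ℓ ≤ ∑_{j=0}^{k} B^(2^j). Then (2 : ℝ)^(k-1) < logb B (ℓ : ℝ) and logb B (ℓ : ℝ) ≤ (2 : ℝ)^k + 1; in particular (2 : ℝ)^k < 2 · logb B (ℓ : ℝ). -/
/-!
Each bucket size dominates all earlier ones together, `∑_{j<k} B^(2^j) < B^(2^k)`, since squaring
at least doubles a number `≥ 2`. Hence a position `ℓ` in bucket `b_k` satisfies
`B^(2^(k-1)) < ℓ ≤ B^(2^k + 1)`, and taking `log_B` gives the bounds.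
-/

open Real Finset

theorem sum_range_pow_two_pow_lt {B : ℕ} (hB : 2 ≤ B) (k : ℕ) :
    ∑ j ∈ range k, B ^ 2 ^ j < B ^ 2 ^ k := by
  induction k with
  | zero => simp only [range_zero, sum_empty, pow_zero, pow_one]; omega
  | succ k ih =>
    have htwo : 2 ≤ B ^ 2 ^ k := hB.trans (Nat.le_self_pow (by positivity) B)
    calc ∑ j ∈ range (k + 1), B ^ 2 ^ j
        = ∑ j ∈ range k, B ^ 2 ^ j + B ^ 2 ^ k := sum_range_succ _ _
      _ < 2 * B ^ 2 ^ k := by omega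
      _ ≤ B ^ 2 ^ k * B ^ 2 ^ k := Nat.mul_le_mul_right _ htwo
      _ = B ^ 2 ^ (k + 1) := by rw [← pow_add, ← two_mul, pow_succ' 2 k]

theorem sum_range_succ_pow_two_pow_le {B : ℕ} (hB : 2 ≤ B) (k : ℕ) :
    ∑ j ∈ range (k + 1), B ^ 2 ^ j ≤ B ^ (2 ^ k + 1) := by
  have hlt := sum_range_pow_two_pow_lt hB k
  calc ∑ j ∈ range (k + 1), B ^ 2 ^ j
      = ∑ j ∈ range k, B ^ 2 ^ j + B ^ 2 ^ k := sum_range_succ _ _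
    _ ≤ 2 * B ^ 2 ^ k := by omega
    _ ≤ B * B ^ 2 ^ k := Nat.mul_le_mul_right _ hB
    _ = B ^ (2 ^ k + 1) := (pow_succ' _ _).symm

theorem Real.natCast_lt_logb_of_pow_lt {b x : ℝ} {n : ℕ} (hb : 1 < b) (h : b ^ n < x) :
    (n : ℝ) < logb b x := by
  have hx : 0 < x := (pow_pos (zero_lt_one.trans hb) n).trans h
  rwa [lt_logb_iff_rpow_lt hb hx, rpow_natCast]

theorem Real.logb_le_natCast_of_le_pow {b x : ℝ} {n : ℕ} (hb : 1 < b) (hx : 0 < x)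
    (h : x ≤ b ^ n) : logb b x ≤ n := by
  rwa [logb_le_iff_le_rpow hb hx, rpow_natCast]

/-- If position `ℓ` lies in bucket `b_k` (for `k ≥ 1`), i.e.
`∑_{j<k} B^(2^j) < ℓ ≤ ∑_{j≤k} B^(2^j)`, then
`2^(k-1) < log_B ℓ`, `log_B ℓ ≤ 2^k + 1`, and in particular
`2^k < 2 · log_B ℓ`. -/
theorem bucket_search_cost_theta_log
    (B k ℓ : ℕ) (hB : 2 ≤ B) (hk : 1 ≤ k)
    (hlo : ∑ j ∈ Finset.range k, B ^ (2 ^ j) < ℓ)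
    (hhi : ℓ ≤ ∑ j ∈ Finset.range (k + 1), B ^ (2 ^ j)) :
    (2 : ℝ) ^ (k - 1) < logb (B : ℝ) (ℓ : ℝ) ∧
    logb (B : ℝ) (ℓ : ℝ) ≤ (2 : ℝ) ^ k + 1 ∧
    (2 : ℝ) ^ k < 2 * logb (B : ℝ) (ℓ : ℝ) := by
  have hB1 : (1 : ℝ) < B := by exact_mod_cast hB
  have hℓ : (0 : ℝ) < ℓ := by exact_mod_cast hlo.pos
  have hlow : B ^ 2 ^ (k - 1) < ℓ :=
    (single_le_sum (f := fun j ↦ B ^ 2 ^ j) (fun _ _ ↦ Nat.zero_le _)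
      (mem_range.2 (by omega))).trans_lt hlo
  have hup : ℓ ≤ B ^ (2 ^ k + 1) := hhi.trans (sum_range_succ_pow_two_pow_le hB k)
  have hl : (2 : ℝ) ^ (k - 1) < logb B ℓ := by
    exact_mod_cast natCast_lt_logb_of_pow_lt hB1 (by exact_mod_cast hlow)
  have hu : logb B ℓ ≤ (2 : ℝ) ^ k + 1 := by
    exact_mod_cast logb_le_natCast_of_le_pow hB1 hℓ (by exact_mod_cast hup)
  refine ⟨hl, hu, ?_⟩
  rw [← mul_pow_sub_one (by omega : k ≠ 0)]
  linarith
end
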